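/- Let μ be a reduced p×q interval matrix with 0 ≤ m_{i,j} ≤ M_{i,j} for all i,j. Then there exists A ∈ μ with rank(A) = 1 if and only if there exist positive real numbers c₁ = 1, c₂, …, c_q such that m_{i,t}·c_k ≤ M_{i,k}·c_t for every i ∈ {1,…,p} and every t, k ∈ {1,…,q}. -/

import Mathlib

/-!
A rank-one matrix is an outer product `u vᵀ`. If it lies in `μ`, its entries are nonnegative and
every column has a positive entry, which forces all entries of `v` to have the same sign; rescaled
so that its first entry is `1`, the vector `v` is the required `c`. Conversely, for positive `c`
the inequalities say exactly that in each row `i` the intervals `[m i j / c j, M i j / c j]` have a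
common point `r i`, and then `r cᵀ` is a rank-one matrix in `μ`.
-/

open Matrix

namespace Matrix

variable {K m n : Type*} [Field K] [Fintype n]

theorem rank_eq_zero_iff {A : Matrix m n K} : A.rank = 0 ↔ A = 0 := by
  rw [rank, Submodule.finrank_eq_zero, LinearMap.range_eq_bot]
  constructor
  · intro h
    ext i j
    classical
    simpa using congr_fun (LinearMap.congr_fun h (Pi.single j 1)) i
  · rintro rfl
    exact mulVecLin_zero

theorem rank_vecMulVec_eq_one {u : m → K} {v : n → K} (hu : u ≠ 0) (hv : v ≠ 0) :
    (vecMulVec u v).rank = 1 := by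
  obtain ⟨i, hi⟩ := Function.ne_iff.1 hu
  obtain ⟨j, hj⟩ := Function.ne_iff.1 hv
  refine (rank_vecMulVec_le u v).antisymm <| Nat.one_le_iff_ne_zero.2 fun h => ?_
  exact mul_ne_zero hi hj congr($(rank_eq_zero_iff.1 h) i j)

theorem exists_eq_vecMulVec_of_rank_eq_one {A : Matrix m n K} (hA : A.rank = 1) :
    ∃ u v, A = vecMulVec u v := by
  rw [rank_eq_finrank_span_cols, finrank_eq_one_iff'] at hA
  obtain ⟨⟨u, _⟩, -, hspan⟩ := hA
  choose v hv using fun j => hspan ⟨A.col j, Submodule.subset_span ⟨j, rfl⟩⟩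
  refine ⟨u, v, ext fun i j => ?_⟩
  simpa [vecMulVec_apply, mul_comm] using (congr_fun (congrArg Subtype.val (hv j)) i).symm

end Matrix

theorem pos_of_zero_notMem_Icc {α : Type*} [Zero α] [PartialOrder α] {a b : α} (ha : 0 ≤ a)
    (hab : a ≤ b) (h : 0 ∉ Set.Icc a b) : 0 < a :=
  ha.lt_of_ne fun ha0 => h ⟨ha0.ge, ha0.le.trans hab⟩

section Ordered

variable {K ι κ : Type*} [Field K] [LinearOrder K] [IsStrictOrderedRing K]

theorem exists_mul_mem_Icc_iff [Fintype κ] [Nonempty κ] {a b c : κ → K} (hc : ∀ j, 0 < c j) :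
    (∃ r, ∀ j, r * c j ∈ Set.Icc (a j) (b j)) ↔ ∀ t k, a t * c k ≤ b k * c t := by
  constructor
  · rintro ⟨r, hr⟩ t k
    calc a t * c k ≤ r * c t * c k := mul_le_mul_of_nonneg_right (hr t).1 (hc k).le
      _ = r * c k * c t := by ring
      _ ≤ b k * c t := mul_le_mul_of_nonneg_right (hr k).2 (hc t).le
  · intro h
    refine ⟨Finset.univ.sup' Finset.univ_nonempty fun t => a t / c t, fun j => ⟨?_, ?_⟩⟩
    · rw [← div_le_iff₀ (hc j)]
      exact Finset.le_sup' (fun t => a t / c t) (Finset.mem_univ j)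
    · rw [← le_div_iff₀ (hc j)]
      refine Finset.sup'_le _ _ fun t _ => ?_
      rw [div_le_div_iff₀ (hc t) (hc j)]
      exact h t j

theorem exists_normalized_pos_vecMulVec_eq {u : ι → K} {v : κ → K}
    (hnonneg : ∀ i j, 0 ≤ u i * v j) (hcol : ∀ j, ∃ i, 0 < u i * v j) (j₀ : κ) :
    ∃ r c, c j₀ = 1 ∧ (∀ j, 0 < c j) ∧ vecMulVec u v = vecMulVec r c := by
  have hv₀ : v j₀ ≠ 0 := by
    obtain ⟨i, hi⟩ := hcol j₀
    exact right_ne_zero_of_mul hi.ne'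
  refine ⟨fun i => u i * v j₀, fun j => v j / v j₀, div_self hv₀, fun j => ?_, ?_⟩
  · obtain ⟨i, hi⟩ := hcol j
    have hui : u i ≠ 0 := left_ne_zero_of_mul hi.ne'
    have hi₀ : 0 < u i * v j₀ := (hnonneg i j₀).lt_of_ne (mul_ne_zero hui hv₀).symm
    show 0 < v j / v j₀
    rw [← mul_div_mul_left (v j) (v j₀) hui]
    exact div_pos hi hi₀
  · ext i j
    simp only [vecMulVec_apply]
    field_simp

end Ordered

theorem rank_one_iff_scaling_general (p q : ℕ) (hq : 0 < q)
    (m M : Matrix (Fin p) (Fin q) ℝ)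
    (hm : ∀ i j, 0 ≤ m i j)
    (hle : ∀ i j, m i j ≤ M i j)
    (hredcol : ∀ j, ∃ i, ¬ (m i j ≤ 0 ∧ 0 ≤ M i j)) :
    (∃ A : Matrix (Fin p) (Fin q) ℝ,
        (∀ i j, A i j ∈ Set.Icc (m i j) (M i j)) ∧ A.rank = 1) ↔
      ∃ c : Fin q → ℝ, c ⟨0, hq⟩ = 1 ∧ (∀ j, 0 < c j) ∧
        ∀ (i : Fin p) (t k : Fin q), m i t * c k ≤ M i k * c t := by
  have : Nonempty (Fin q) := ⟨⟨0, hq⟩⟩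
  have hcol : ∀ j, ∃ i, 0 < m i j := fun j =>
    (hredcol j).imp fun i => pos_of_zero_notMem_Icc (hm i j) (hle i j)
  constructor
  · rintro ⟨A, hA, hrank⟩
    obtain ⟨u, v, rfl⟩ := exists_eq_vecMulVec_of_rank_eq_one hrank
    obtain ⟨r, c, hc₀, hc, huv⟩ := exists_normalized_pos_vecMulVec_eq
      (fun i j => (hm i j).trans (hA i j).1)
      (fun j => (hcol j).imp fun i hi => hi.trans_le (hA i j).1) ⟨0, hq⟩
    rw [huv] at hA
    exact ⟨c, hc₀, hc, fun i => (exists_mul_mem_Icc_iff hc).1 ⟨r i, hA i⟩⟩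
  · rintro ⟨c, hc₀, hc, hscale⟩
    choose r hr using fun i => (exists_mul_mem_Icc_iff hc).2 (hscale i)
    obtain ⟨i₀, hi₀⟩ := hcol ⟨0, hq⟩
    refine ⟨vecMulVec r c, hr, rank_vecMulVec_eq_one ?_ ?_⟩
    · intro hr0
      have := (hr i₀ ⟨0, hq⟩).1
      simp only [hr0, Pi.zero_apply, zero_mul] at this
      linarith
    · intro hc0
      simp [hc0] at hc₀

/-- For a reduced p×q interval matrix with nonnegative lower bounds,
μ contains a rank-one matrix iff there exist positive reals c₁ = 1, c₂, …, c_q with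
m_{i,t} · c_k ≤ M_{i,k} · c_t for all i, t, k. -/
theorem rank_one_iff_scaling (p q : ℕ) (hq : 0 < q)
    (m M : Matrix (Fin p) (Fin q) ℝ)
    (hm : ∀ i j, 0 ≤ m i j)
    (hle : ∀ i j, m i j ≤ M i j)
    (hredrow : ∀ i, ∃ j, ¬ (m i j ≤ 0 ∧ 0 ≤ M i j))
    (hredcol : ∀ j, ∃ i, ¬ (m i j ≤ 0 ∧ 0 ≤ M i j)) :
    (∃ A : Matrix (Fin p) (Fin q) ℝ,
        (∀ i j, A i j ∈ Set.Icc (m i j) (M i j)) ∧ A.rank = 1) ↔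
      ∃ c : Fin q → ℝ, c ⟨0, hq⟩ = 1 ∧ (∀ j, 0 < c j) ∧
        ∀ (i : Fin p) (t k : Fin q), m i t * c k ≤ M i k * c t :=
  rank_one_iff_scaling_general p q hq m M hm hle hredcol
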